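/- (Lemma 5, lower-end truncation step) In the setup below, assume additionally that f(θ·x) ≤ θ^d·f(x) for all x ∈ ℝ₊ⁿ and θ ∈ [0,1], where d ∈ (0,1]. Then for every nonempty S ⊆ {1,…,n} with |S| ≤ k: v₂(S) ≥ v₁(S) / (1 + a^d·k/(ε−Δ)). -/

import Mathlib

/-! Write `X̂_S = X̃_S + Y` with `0 ≤ Y ≤ a • τ_S`. Subadditivity, monotonicity and the
homogeneity bound give `f (X̂_S) ≤ f (X̃_S) + a^d f (τ_S)` pointwise, hence
`v₁(S) ≤ v₂(S) + a^d f (τ_S)`. By subadditivity `f (τ_S) ≤ ∑_{i ∈ S} f (τ_i e_i)`, and each term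
is at most `v₂(S) / (ε - Δ)`: on the event `X_i > τ_i`, of probability at least `ε - Δ`, the
vector `X̃_S` dominates `τ_i e_i`, so Markov's inequality applies to `f (X̃_S)`. -/

open MeasureTheory ProbabilityTheory

def mask {n : ℕ} (S : Finset (Fin n)) (x : Fin n → ℝ) : Fin n → ℝ :=
  fun i => if i ∈ S then x i else 0

theorem apply_le_apply_add_rpow_mul_of_sub_le_smul {E : Type*} [AddCommGroup E] [PartialOrder E]
    [IsOrderedAddMonoid E] [Module ℝ E] {f : E → ℝ}
    (hf_mono : ∀ x y : E, 0 ≤ x → x ≤ y → f x ≤ f y)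
    (hf_subadd : ∀ x y : E, 0 ≤ x → 0 ≤ y → f (x + y) ≤ f x + f y)
    {d : ℝ} (hf_hom : ∀ (x : E) (θ : ℝ), 0 ≤ x → θ ∈ Set.Icc (0 : ℝ) 1 → f (θ • x) ≤ θ ^ d * f x)
    {a : ℝ} (ha : a ∈ Set.Icc (0 : ℝ) 1) {x y t : E} (ht : 0 ≤ t) (hy : 0 ≤ y) (hyx : y ≤ x)
    (hxy : x - y ≤ a • t) :
    f x ≤ f y + a ^ d * f t := by
  have hgap : 0 ≤ x - y := sub_nonneg.2 hyx
  calc f x = f (y + (x - y)) := by rw [add_sub_cancel]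
    _ ≤ f y + f (x - y) := hf_subadd _ _ hy hgap
    _ ≤ f y + a ^ d * f t := by
      gcongr
      exact (hf_mono _ _ hgap hxy).trans (hf_hom t a ht ha)

theorem integral_le_integral_add_rpow_mul_of_sub_le_smul {E : Type*} [AddCommGroup E]
    [PartialOrder E] [IsOrderedAddMonoid E] [Module ℝ E] {f : E → ℝ}
    (hf_nonneg : ∀ x : E, 0 ≤ x → 0 ≤ f x)
    (hf_mono : ∀ x y : E, 0 ≤ x → x ≤ y → f x ≤ f y)
    (hf_subadd : ∀ x y : E, 0 ≤ x → 0 ≤ y → f (x + y) ≤ f x + f y)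
    {d : ℝ} (hf_hom : ∀ (x : E) (θ : ℝ), 0 ≤ x → θ ∈ Set.Icc (0 : ℝ) 1 → f (θ • x) ≤ θ ^ d * f x)
    {Ω : Type*} [MeasurableSpace Ω] {μ : Measure Ω} [IsProbabilityMeasure μ]
    {a : ℝ} (ha : a ∈ Set.Icc (0 : ℝ) 1) {X Y : Ω → E} {t : E} (ht : 0 ≤ t)
    (hY : ∀ ω, 0 ≤ Y ω) (hYX : ∀ ω, Y ω ≤ X ω) (hXY : ∀ ω, X ω - Y ω ≤ a • t)
    (hY_int : Integrable (fun ω => f (Y ω)) μ) :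
    ∫ ω, f (X ω) ∂μ ≤ ∫ ω, f (Y ω) ∂μ + a ^ d * f t := by
  have hbound : ∫ ω, f (X ω) ∂μ ≤ ∫ ω, (f (Y ω) + a ^ d * f t) ∂μ :=
    integral_mono_of_nonneg (ae_of_all _ fun ω => hf_nonneg _ ((hY ω).trans (hYX ω)))
      (hY_int.add (integrable_const _)) (ae_of_all _ fun ω =>
        apply_le_apply_add_rpow_mul_of_sub_le_smul hf_mono hf_subadd hf_hom ha ht (hY ω) (hYX ω)
          (hXY ω))
  simpa [integral_add hY_int (integrable_const _)] using hbound

theorem one_sub_measureReal_le_measureReal_compl {Ω : Type*} [MeasurableSpace Ω]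
    {μ : Measure Ω} [IsProbabilityMeasure μ] (s : Set Ω) :
    1 - μ.real s ≤ μ.real sᶜ := by
  have h := measureReal_union_le (μ := μ) s sᶜ
  rw [Set.union_compl_self, probReal_univ] at h
  linarith

theorem measureReal_mul_le_integral_of_le_apply {ι : Type*} [DecidableEq ι]
    {f : (ι → ℝ) → ℝ} (hf_nonneg : ∀ x : ι → ℝ, 0 ≤ x → 0 ≤ f x)
    (hf_mono : ∀ x y : ι → ℝ, 0 ≤ x → x ≤ y → f x ≤ f y)
    {Ω : Type*} [MeasurableSpace Ω] {μ : Measure Ω} [IsFiniteMeasure μ]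
    {Y : Ω → ι → ℝ} (hY : ∀ ω, 0 ≤ Y ω) (hY_int : Integrable (fun ω => f (Y ω)) μ)
    {i : ι} {c : ℝ} (hc : 0 ≤ c) {s : Set Ω} (hs : ∀ ω ∈ s, c ≤ Y ω i) :
    μ.real s * f (Pi.single i c) ≤ ∫ ω, f (Y ω) ∂μ := by
  have hsingle : (0 : ι → ℝ) ≤ Pi.single i c := Pi.single_nonneg.2 hc
  have hsub : s ⊆ {ω | f (Pi.single i c) ≤ f (Y ω)} := fun ω hω => by
    refine hf_mono _ _ hsingle fun j => ?_
    rcases eq_or_ne j i with rfl | hj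
    · simpa using hs ω hω
    · simpa [Pi.single_eq_of_ne hj] using hY ω j
  calc μ.real s * f (Pi.single i c)
      ≤ f (Pi.single i c) * μ.real {ω | f (Pi.single i c) ≤ f (Y ω)} := by
        rw [mul_comm]
        exact mul_le_mul_of_nonneg_left (measureReal_mono hsub) (hf_nonneg _ hsingle)
    _ ≤ ∫ ω, f (Y ω) ∂μ :=
      mul_meas_ge_le_integral_of_nonneg (ae_of_all _ fun ω => hf_nonneg _ (hY ω)) hY_int _

section Mask

variable {n : ℕ} (S : Finset (Fin n))

theorem mask_apply_of_mem {x : Fin n → ℝ} {i : Fin n} (hi : i ∈ S) : mask S x i = x i :=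
  if_pos hi

theorem mask_nonneg {x : Fin n → ℝ} (hx : 0 ≤ x) : 0 ≤ mask S x := fun i => by
  unfold mask; split_ifs
  exacts [hx i, le_rfl]

theorem mask_mono {x y : Fin n → ℝ} (hxy : x ≤ y) : mask S x ≤ mask S y := fun i => by
  unfold mask; split_ifs
  exacts [hxy i, le_rfl]

theorem mask_sub (x y : Fin n → ℝ) : mask S x - mask S y = mask S (x - y) := by
  ext i; by_cases hi : i ∈ S <;> simp [mask, hi]

theorem smul_mask (a : ℝ) (x : Fin n → ℝ) : a • mask S x = mask S (a • x) := by
  ext i; by_cases hi : i ∈ S <;> simp [mask, hi]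

theorem mask_eq_sum_single (x : Fin n → ℝ) : mask S x = ∑ i ∈ S, Pi.single i (x i) := by
  ext j; rw [Finset.sum_apply, Finset.sum_pi_single]; rfl

theorem apply_mask_le_card_mul {f : (Fin n → ℝ) → ℝ}
    (hf_subadd : ∀ x y : Fin n → ℝ, 0 ≤ x → 0 ≤ y → f (x + y) ≤ f x + f y) (hS : S.Nonempty)
    {x : Fin n → ℝ} (hx : 0 ≤ x) {B : ℝ} (hB : ∀ i ∈ S, f (Pi.single i (x i)) ≤ B) :
    f (mask S x) ≤ S.card * B := calc
  f (mask S x) ≤ ∑ i ∈ S, f (Pi.single i (x i)) := by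
    rw [mask_eq_sum_single]
    exact Finset.le_sum_nonempty_of_subadditive_on_pred f (0 ≤ ·) hf_subadd
      (fun _ _ => add_nonneg) _ S hS fun i _ => Pi.single_nonneg.2 (hx i)
  _ ≤ S.card * B := by simpa using Finset.sum_le_card_nsmul S _ _ hB

end Mask

theorem lower_end_truncation_bound_general
    {Ωs : Type*} [MeasurableSpace Ωs] (μ : Measure Ωs) [IsProbabilityMeasure μ]
    {n : ℕ}
    (X : Fin n → Ωs → ℝ)
    (hX_nonneg : ∀ i ω, 0 ≤ X i ω)
    (f : (Fin n → ℝ) → ℝ)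
    (hf_nonneg : ∀ x : Fin n → ℝ, 0 ≤ x → 0 ≤ f x)
    (hf_mono : ∀ x y : Fin n → ℝ, 0 ≤ x → x ≤ y → f x ≤ f y)
    (hf_subadd : ∀ x y : Fin n → ℝ, 0 ≤ x → 0 ≤ y → f (x + y) ≤ f x + f y)
    (d : ℝ)
    (hf_hom : ∀ (x : Fin n → ℝ) (θ : ℝ), 0 ≤ x → θ ∈ Set.Icc (0 : ℝ) 1 →
      f (θ • x) ≤ θ ^ d * f x)
    (k : ℕ)
    (ε Δ : ℝ) (hΔ : Δ ∈ Set.Ico (0 : ℝ) ε)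
    (τ : Fin n → ℝ) (hτ : ∀ i, 0 ≤ τ i)
    (hquant : ∀ i, 1 - ε ≤ (μ {ω | X i ω ≤ τ i}).toReal ∧
      (μ {ω | X i ω ≤ τ i}).toReal ≤ 1 - ε + Δ)
    (cst : Fin n → ℝ) (hcst : ∀ i, τ i < cst i)
    (Xhat : Fin n → Ωs → ℝ)
    (hXhat : ∀ i ω, Xhat i ω = if X i ω ≤ τ i then X i ω else cst i)
    (a : ℝ) (ha : a ∈ Set.Icc (0 : ℝ) 1)
    (Xtil : Fin n → Ωs → ℝ)
    (hXtil : ∀ i ω, Xtil i ω = if a * τ i < Xhat i ω then Xhat i ω else 0)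
    (v₁ v₂ : Finset (Fin n) → ℝ)
    (hv₁ : ∀ S, v₁ S = ∫ ω, f (mask S (fun i => Xhat i ω)) ∂μ)
    (hv₂ : ∀ S, v₂ S = ∫ ω, f (mask S (fun i => Xtil i ω)) ∂μ)
    (hv₂_int : ∀ S : Finset (Fin n),
      Integrable (fun ω => f (mask S (fun i => Xtil i ω))) μ) :
    ∀ S : Finset (Fin n), S.Nonempty → S.card ≤ k →
      v₁ S / (1 + a ^ d * k / (ε - Δ)) ≤ v₂ S := by
  intro S hS hcard
  have hεΔ : 0 < ε - Δ := sub_pos.2 hΔ.2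
  have hXhat_nonneg : ∀ i ω, 0 ≤ Xhat i ω := fun i ω => by
    rw [hXhat]; split_ifs <;> linarith [hX_nonneg i ω, hτ i, hcst i]
  have hXtil_nonneg : ∀ i ω, 0 ≤ Xtil i ω := fun i ω => by
    rw [hXtil]; split_ifs <;> linarith [hXhat_nonneg i ω]
  have hXtil_le : ∀ i ω, Xtil i ω ≤ Xhat i ω := fun i ω => by
    rw [hXtil]; split_ifs <;> linarith [hXhat_nonneg i ω]
  have hgap : ∀ i ω, Xhat i ω - Xtil i ω ≤ a * τ i := fun i ω => by
    rw [hXtil]; split_ifs <;> linarith [mul_nonneg ha.1 (hτ i)]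
  -- above the threshold, `Xhat i = cst i > τ i ≥ a * τ i` survives the second truncation
  have hXtil_tail : ∀ i ω, τ i < X i ω → τ i ≤ Xtil i ω := fun i ω h => by
    have hcut : a * τ i < cst i := (mul_le_of_le_one_left (hτ i) ha.2).trans_lt (hcst i)
    rw [hXtil, hXhat, if_neg h.not_ge, if_pos hcut]
    exact (hcst i).le
  have hv₁_le : v₁ S ≤ v₂ S + a ^ d * f (mask S τ) := by
    rw [hv₁, hv₂]
    refine integral_le_integral_add_rpow_mul_of_sub_le_smul hf_nonneg hf_mono hf_subadd hf_hom ha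
      (mask_nonneg S hτ) (fun ω => mask_nonneg S fun i => hXtil_nonneg i ω)
      (fun ω => mask_mono S fun i => hXtil_le i ω) (fun ω => ?_) (hv₂_int S)
    rw [mask_sub, smul_mask]
    exact mask_mono S fun i => hgap i ω
  have hcoord : ∀ i ∈ S, f (Pi.single i (τ i)) ≤ v₂ S / (ε - Δ) := fun i hi => by
    have htail : ε - Δ ≤ μ.real {ω | τ i < X i ω} := by
      have h := one_sub_measureReal_le_measureReal_compl (μ := μ) {ω | X i ω ≤ τ i}
      simp only [Set.compl_ofPred, not_le] at h
      linarith [(hquant i).2, measureReal_def μ {ω | X i ω ≤ τ i}]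
    rw [le_div_iff₀ hεΔ, mul_comm, hv₂]
    refine (mul_le_mul_of_nonneg_right htail (hf_nonneg _ (Pi.single_nonneg.2 (hτ i)))).trans ?_
    exact measureReal_mul_le_integral_of_le_apply hf_nonneg hf_mono
      (fun ω => mask_nonneg S fun j => hXtil_nonneg j ω) (hv₂_int S) (hτ i)
      fun ω hω => (mask_apply_of_mem S hi).trans_ge (hXtil_tail i ω hω)
  have hv₂_nonneg : 0 ≤ v₂ S :=
    hv₂ S ▸ integral_nonneg fun ω => hf_nonneg _ (mask_nonneg S fun i => hXtil_nonneg i ω)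
  have hmask_le : f (mask S τ) ≤ k * (v₂ S / (ε - Δ)) :=
    (apply_mask_le_card_mul S hf_subadd hS hτ hcoord).trans (by gcongr)
  have had : 0 ≤ a ^ d := Real.rpow_nonneg ha.1 d
  rw [div_le_iff₀ (by positivity)]
  calc v₁ S ≤ v₂ S + a ^ d * (k * (v₂ S / (ε - Δ))) := hv₁_le.trans (by gcongr)
    _ = v₂ S * (1 + a ^ d * k / (ε - Δ)) := by ring

/-- Lemma 5 (lower-end truncation step): if moreover `f (θ • x) ≤ θ^d · f x` for
`θ ∈ [0,1]` with `d ∈ (0,1]`, then with `X̃_i = X̂_i·1{X̂_i > a·τ_i}`,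
`v₂(S) = E[f(X̃_S)]` satisfies `v₂(S) ≥ v₁(S)/(1 + a^d·k/(ε−Δ))` for every nonempty
`S` with `|S| ≤ k`. -/
theorem lower_end_truncation_bound
    {Ωs : Type*} [MeasurableSpace Ωs] (μ : Measure Ωs) [IsProbabilityMeasure μ]
    {n : ℕ} (hn : 1 ≤ n)
    (X : Fin n → Ωs → ℝ)
    (hX_meas : ∀ i, Measurable (X i))
    (hX_nonneg : ∀ i ω, 0 ≤ X i ω)
    (hX_indep : iIndepFun X μ)
    (f : (Fin n → ℝ) → ℝ)
    (hf_meas : Measurable f)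
    (hf_nonneg : ∀ x : Fin n → ℝ, 0 ≤ x → 0 ≤ f x)
    (hf_mono : ∀ x y : Fin n → ℝ, 0 ≤ x → x ≤ y → f x ≤ f y)
    (hf_subadd : ∀ x y : Fin n → ℝ, 0 ≤ x → 0 ≤ y → f (x + y) ≤ f x + f y)
    (d : ℝ) (hd : d ∈ Set.Ioc (0 : ℝ) 1)
    (hf_hom : ∀ (x : Fin n → ℝ) (θ : ℝ), 0 ≤ x → θ ∈ Set.Icc (0 : ℝ) 1 →
      f (θ • x) ≤ θ ^ d * f x)
    (k : ℕ) (hk : 1 ≤ k)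
    (ε Δ : ℝ) (hε : ε ∈ Set.Ioo (0 : ℝ) 1) (hΔ : Δ ∈ Set.Ico (0 : ℝ) ε)
    (τ : Fin n → ℝ) (hτ : ∀ i, 0 ≤ τ i)
    (hquant : ∀ i, 1 - ε ≤ (μ {ω | X i ω ≤ τ i}).toReal ∧
      (μ {ω | X i ω ≤ τ i}).toReal ≤ 1 - ε + Δ)
    (H : Fin n → ℝ)
    (hH : ∀ i, H i = (∫ ω in {ω | τ i < X i ω}, f (Pi.single i (X i ω)) ∂μ) /
      (μ {ω | τ i < X i ω}).toReal)
    (hH_int : ∀ i, Integrable (fun ω => f (Pi.single i (X i ω))) μ)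
    (cst : Fin n → ℝ) (hcst : ∀ i, τ i < cst i)
    (hcstH : ∀ i, f (Pi.single i (cst i)) = H i)
    (Xhat : Fin n → Ωs → ℝ)
    (hXhat : ∀ i ω, Xhat i ω = if X i ω ≤ τ i then X i ω else cst i)
    (a : ℝ) (ha : a ∈ Set.Icc (0 : ℝ) 1)
    (Xtil : Fin n → Ωs → ℝ)
    (hXtil : ∀ i ω, Xtil i ω = if a * τ i < Xhat i ω then Xhat i ω else 0)
    (v₁ v₂ : Finset (Fin n) → ℝ)
    (hv₁ : ∀ S, v₁ S = ∫ ω, f (mask S (fun i => Xhat i ω)) ∂μ)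
    (hv₂ : ∀ S, v₂ S = ∫ ω, f (mask S (fun i => Xtil i ω)) ∂μ)
    (hv₁_int : ∀ S : Finset (Fin n),
      Integrable (fun ω => f (mask S (fun i => Xhat i ω))) μ)
    (hv₂_int : ∀ S : Finset (Fin n),
      Integrable (fun ω => f (mask S (fun i => Xtil i ω))) μ) :
    ∀ S : Finset (Fin n), S.Nonempty → S.card ≤ k →
      v₁ S / (1 + a ^ d * k / (ε - Δ)) ≤ v₂ S :=
  lower_end_truncation_bound_general μ X hX_nonneg f hf_nonneg hf_mono hf_subadd d hf_hom k ε Δ hΔ τ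
    hτ hquant cst hcst Xhat hXhat a ha Xtil hXtil v₁ v₂ hv₁ hv₂ hv₂_int
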